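/- Lemma 6: Let X_n = (Y_n, Z_n) take values in S = Y × (0,∞), where (Z_n) is i.i.d., Z_{n+1} is independent of (Y_1,Z_1,...,Y_n,Z_n,Y_{n+1}) for all n ≥ 0, and the predictive distributions satisfy P(Y_{n+1} ∈ B | G_n) = (α P(Y_1 ∈ B) + Σ_{i=1}^n Z_i I_B(Y_i)) / (α + Σ_{i=1}^n Z_i) a.s. for some constant α > 0 and all measurable B. Then the sequence X = (X_1, X_2, ...) is conditionally identically distributed (c.i.d.). -/

import Mathlib

open MeasureTheory Filter Set

/-- The σ-field generated by the first `n` coordinates. -/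
noncomputable def cylG (S : Type*) [MeasurableSpace S] (n : ℕ) : MeasurableSpace (ℕ → S) :=
  MeasurableSpace.comap (fun ω (i : Fin n) => ω i) inferInstance

/-- Empirical frequency of `B` among the first `n` observations. -/
noncomputable def empMeas {S : Type*} (n : ℕ) (B : Set S) (ω : ℕ → S) : ℝ :=
  (n : ℝ)⁻¹ * ∑ i ∈ Finset.range n, B.indicator (fun _ => (1 : ℝ)) (ω i)

/-- The predictive probability `a_n(B) = P(X_{n+1} ∈ B ∣ G_n)` (0-indexed). -/
noncomputable def predProb {S : Type*} [MeasurableSpace S] (P : Measure (ℕ → S))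
    (n : ℕ) (B : Set S) : (ℕ → S) → ℝ :=
  P[fun ω => B.indicator (fun _ => (1 : ℝ)) (ω n) | cylG S n]

/-- The coordinate sequence is conditionally identically distributed under `P`. -/
def CID {S : Type*} [MeasurableSpace S] (P : Measure (ℕ → S)) : Prop :=
  ∀ B : Set S, MeasurableSet B → ∀ n k : ℕ, n < k →
    (P[fun ω => B.indicator (fun _ => (1 : ℝ)) (ω k) | cylG S n])
      =ᵐ[P] P[fun ω => B.indicator (fun _ => (1 : ℝ)) (ω n) | cylG S n]

/-- `W_n(B) = √n (μ_n(B) - μ(B))`, given the limit random measure `μ` (as `μlim`). -/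
noncomputable def Wn {S : Type*} (μlim : Set S → (ℕ → S) → ℝ) (n : ℕ) (B : Set S)
    (ω : ℕ → S) : ℝ :=
  Real.sqrt n * (empMeas n B ω - μlim B ω)

/-- `D` is countably determined: some countable `D₀ ⊆ D` realizes the same sup-distance
between any two probability laws on `S`. -/
def CountablyDetermined {S : Type*} [MeasurableSpace S] (D : Set (Set S)) : Prop :=
  (∀ B ∈ D, MeasurableSet B) ∧
  ∃ D0 ⊆ D, D0.Countable ∧ ∀ ν1 ν2 : Measure S, IsProbabilityMeasure ν1 →
    IsProbabilityMeasure ν2 →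
    (⨆ B : D0, |(ν1 B).toReal - (ν2 B).toReal|) = ⨆ B : D, |(ν1 B).toReal - (ν2 B).toReal|

/-!
The predictive probabilities `aₙ(B)` form a martingale. The new weight `Zₙ` is independent of
`(X₁, …, Xₙ₋₁, Yₙ)`, and writing `(a + z e)/(c + z) = a/(c + z) + e (1 - c/(c + z))` one can
integrate it out; together with `E[1_B(Yₙ) | Gₙ] = aₙ(B)` this gives `E[aₙ₊₁(B) | Gₙ] = aₙ(B)`, so
`Yₙ₊₁` and `Yₙ` have the same conditional law given `Gₙ`. As `Zₙ₊₁` and `Zₙ` are identically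
distributed and independent of the past, the same holds for `Xₙ₊₁` and `Xₙ`, and the tower property
turns this one-step identity into the c.i.d. property.
-/

open ProbabilityTheory

section General

variable {Ω E : Type*} {m m₀ : MeasurableSpace Ω} {P : Measure Ω}
  [NormedAddCommGroup E] [NormedSpace ℝ E]

lemma condExp_ae_eq_condExp_of_forall_setIntegral_eq [CompleteSpace E] [IsFiniteMeasure P]
    (hm : m ≤ m₀) {f g : Ω → E} (hf : Integrable f P) (hg : Integrable g P)
    (hfg : ∀ s, MeasurableSet[m] s → ∫ x in s, f x ∂P = ∫ x in s, g x ∂P) :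
    P[f | m] =ᵐ[P] P[g | m] :=
  ae_eq_condExp_of_forall_setIntegral_eq hm hg (fun _ _ _ => integrable_condExp.integrableOn)
    (fun s hs _ => by rw [setIntegral_condExp hm hf hs, hfg s hs])
    stronglyMeasurable_condExp.aestronglyMeasurable

lemma condExp_ae_eq_of_forall_condExp_succ_ae_eq [CompleteSpace E] [IsFiniteMeasure P]
    {ℱ : ℕ → MeasurableSpace Ω} (hmono : Monotone ℱ) (hle : ∀ n, ℱ n ≤ m₀) {f : ℕ → Ω → E}
    (hsucc : ∀ n, P[f (n + 1) | ℱ n] =ᵐ[P] P[f n | ℱ n]) {n k : ℕ} (hnk : n ≤ k) :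
    P[f k | ℱ n] =ᵐ[P] P[f n | ℱ n] := by
  induction k, hnk using Nat.le_induction with
  | base => rfl
  | succ k hnk ih =>
    calc P[f (k + 1) | ℱ n]
        =ᵐ[P] P[P[f (k + 1) | ℱ k] | ℱ n] := (condExp_condExp_of_le (hmono hnk) (hle k)).symm
      _ =ᵐ[P] P[P[f k | ℱ k] | ℱ n] := condExp_congr_ae (hsucc k)
      _ =ᵐ[P] P[f k | ℱ n] := condExp_condExp_of_le (hmono hnk) (hle k)
      _ =ᵐ[P] P[f n | ℱ n] := ih

lemma integral_mul_condExp [IsFiniteMeasure P] (hm : m ≤ m₀) {f g : Ω → ℝ}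
    (hg : StronglyMeasurable[m] g) {C : ℝ} (hgC : ∀ᵐ ω ∂P, ‖g ω‖ ≤ C) (hf : Integrable f P) :
    ∫ ω, g ω * P[f | m] ω ∂P = ∫ ω, g ω * f ω ∂P := by
  calc ∫ ω, g ω * P[f | m] ω ∂P = ∫ ω, P[g * f | m] ω ∂P :=
        integral_congr_ae (condExp_stronglyMeasurable_mul_of_bound hm hg hf C hgC).symm
    _ = ∫ ω, g ω * f ω ∂P := integral_condExp hm

lemma ProbabilityTheory.IndepFun.integral_comp_eq_integral_integral {α β : Type*}
    [MeasurableSpace α] [MeasurableSpace β] [IsFiniteMeasure P] {T : Ω → α} {Z : Ω → β}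
    (hTZ : IndepFun T Z P) (hT : Measurable T) (hZ : Measurable Z) {h : α × β → E}
    (hh : Integrable h ((P.map T).prod (P.map Z))) :
    ∫ ω, h (T ω, Z ω) ∂P = ∫ ω, ∫ z, h (T ω, z) ∂(P.map Z) ∂P := by
  have hmap : P.map (fun ω => (T ω, Z ω)) = (P.map T).prod (P.map Z) :=
    (indepFun_iff_map_prod_eq_prod_map_map hT.aemeasurable hZ.aemeasurable).mp hTZ
  rw [← integral_map hT.aemeasurable hh.integral_prod_left.aestronglyMeasurable,
    ← integral_prod h hh, ← hmap,
    integral_map (hT.prodMk hZ).aemeasurable (hmap ▸ hh.aestronglyMeasurable)]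

lemma integral_indicator_one_comp {Ω X : Type*} [MeasurableSpace Ω] [MeasurableSpace X]
    {μ : Measure Ω} {f : Ω → X} (hf : Measurable f) {s : Set X} (hs : MeasurableSet s) :
    ∫ ω, s.indicator (fun _ => (1 : ℝ)) (f ω) ∂μ = μ.real (f ⁻¹' s) := by
  rw [show (fun ω => s.indicator (fun _ => (1 : ℝ)) (f ω)) = (f ⁻¹' s).indicator 1 from rfl,
    integral_indicator_one (hf hs)]

lemma integral_indicator_comp_mul_indicator_comp {Ω X₁ X₂ : Type*} [MeasurableSpace Ω]
    [MeasurableSpace X₁] [MeasurableSpace X₂] {μ : Measure Ω} {f₁ : Ω → X₁} {f₂ : Ω → X₂}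
    (hf₁ : Measurable f₁) (hf₂ : Measurable f₂) {s₁ : Set X₁} {s₂ : Set X₂}
    (hs₁ : MeasurableSet s₁) (hs₂ : MeasurableSet s₂) :
    ∫ ω, s₁.indicator (fun _ => (1 : ℝ)) (f₁ ω) * s₂.indicator (fun _ => (1 : ℝ)) (f₂ ω) ∂μ
      = μ.real (f₁ ⁻¹' s₁ ∩ f₂ ⁻¹' s₂) := by
  rw [← integral_indicator_one ((hf₁ hs₁).inter (hf₂ hs₂)), Set.inter_indicator_one]
  rfl

lemma norm_le_one_of_mem_Icc {x : ℝ} (hx : x ∈ Icc (0 : ℝ) 1) : ‖x‖ ≤ 1 :=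
  abs_le.2 ⟨by linarith [hx.1], hx.2⟩

lemma norm_indicator_one_le {X : Type*} (s : Set X) (x : X) :
    ‖s.indicator (fun _ => (1 : ℝ)) x‖ ≤ 1 :=
  (norm_indicator_le_norm_self (s := s) (f := fun _ => (1 : ℝ)) (a := x)).trans norm_one.le

lemma div_mem_Icc_of_mem_Icc {a c : ℝ} (ha : a ∈ Icc 0 c) : a / c ∈ Icc (0 : ℝ) 1 :=
  ⟨div_nonneg ha.1 (ha.1.trans ha.2), div_le_one_of_le₀ ha.2 (ha.1.trans ha.2)⟩

end General

section Cylinder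

variable (S : Type*) [MeasurableSpace S]

lemma cylG_le (n : ℕ) : cylG S n ≤ (inferInstance : MeasurableSpace (ℕ → S)) :=
  (measurable_pi_lambda (fun (ω : ℕ → S) (i : Fin n) => ω i) fun _ =>
    measurable_pi_apply _).comap_le

lemma cylG_mono : Monotone (cylG S) := by
  rintro n k hnk _ ⟨t, ht, rfl⟩
  exact ⟨(fun v (i : Fin n) => v (Fin.castLE hnk i)) ⁻¹' t,
    measurable_pi_lambda _ (fun i => measurable_pi_apply _) ht, rfl⟩

lemma cylG_zero : cylG S 0 = ⊥ := by
  have : (fun (ω : ℕ → S) (i : Fin 0) => ω i) = fun _ => Fin.elim0 :=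
    funext fun _ => Subsingleton.elim _ _
  rw [cylG, this, MeasurableSpace.comap_const]

variable {S}

lemma measurable_comp_cylG {n : ℕ} {β : Type*} [MeasurableSpace β] {g : (Fin n → S) → β}
    (hg : Measurable g) : Measurable[cylG S n] fun ω => g fun i : Fin n => ω i :=
  hg.comp (comap_measurable _)

end Cylinder

section Weights

variable {ν : Measure ℝ} [IsProbabilityMeasure ν] {c : ℝ}

noncomputable def meanInvTotal (ν : Measure ℝ) (c : ℝ) : ℝ := ∫ z, (c + max z 0)⁻¹ ∂ν

lemma inv_add_max_mem_Icc (hc : 0 < c) (z : ℝ) : (c + max z 0)⁻¹ ∈ Icc 0 c⁻¹ :=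
  ⟨inv_nonneg.2 (by positivity), inv_anti₀ hc (le_add_of_nonneg_right (le_max_right z 0))⟩

lemma integrable_inv_add_max (hc : 0 < c) : Integrable (fun z => (c + max z 0)⁻¹) ν :=
  .of_bound (by fun_prop) c⁻¹ (ae_of_all _ fun z => by
    rw [Real.norm_of_nonneg (inv_add_max_mem_Icc hc z).1]; exact (inv_add_max_mem_Icc hc z).2)

lemma mul_meanInvTotal_mem_Icc (hc : 0 < c) : c * meanInvTotal ν c ∈ Icc 0 1 := by
  have h0 : 0 ≤ meanInvTotal ν c := integral_nonneg fun z => (inv_add_max_mem_Icc hc z).1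
  have h1 : meanInvTotal ν c ≤ c⁻¹ := by
    simpa [meanInvTotal] using integral_mono (integrable_inv_add_max hc)
      (integrable_const (μ := ν) c⁻¹) fun z => (inv_add_max_mem_Icc hc z).2
  exact ⟨by positivity, by simpa [hc.ne'] using mul_le_mul_of_nonneg_left h1 hc.le⟩

lemma measurable_meanInvTotal : Measurable (meanInvTotal ν) :=
  (show Measurable fun q : ℝ × ℝ => (q.1 + max q.2 0)⁻¹ by fun_prop).stronglyMeasurable
    |>.integral_prod_right' |>.measurable

lemma integral_urn_update (hc : 0 < c) (a e : ℝ) :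
    ∫ z, (a + max z 0 * e) / (c + max z 0) ∂ν
      = a * meanInvTotal ν c + e * (1 - c * meanInvTotal ν c) := by
  have hint := integrable_inv_add_max (ν := ν) hc
  have hpt : ∀ z : ℝ, (a + max z 0 * e) / (c + max z 0)
      = a * (c + max z 0)⁻¹ + e * (1 - c * (c + max z 0)⁻¹) := fun z => by
    have : c + max z 0 ≠ 0 := by positivity
    field_simp
    ring
  have hint' : Integrable (fun z => 1 - c * (c + max z 0)⁻¹) ν :=
    (integrable_const 1).sub (hint.const_mul c)
  simp_rw [hpt]
  rw [integral_add (hint.const_mul a) (hint'.const_mul e), integral_const_mul, integral_const_mul,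
    integral_sub (integrable_const 1) (hint.const_mul c), integral_const_mul]
  simp [meanInvTotal]

end Weights

section Urn

variable {𝒴 : Type*} {α p : ℝ} {B : Set 𝒴} {n : ℕ}

/-- Numerator of the predictive formula (4), `p` standing for `P(Y₁ ∈ B)`. The weights enter as
`max z 0`: the `Zᵢ` are only a.s. positive, and clamping keeps every urn quantity bounded on the
whole sample space. -/
noncomputable def urnMass (α p : ℝ) (B : Set 𝒴) {n : ℕ} (v : Fin n → 𝒴 × ℝ) : ℝ :=
  α * p + ∑ i, max (v i).2 0 * B.indicator (fun _ => (1 : ℝ)) (v i).1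

noncomputable def urnTotal (α : ℝ) {n : ℕ} (v : Fin n → 𝒴 × ℝ) : ℝ :=
  α + ∑ i, max (v i).2 0

noncomputable def urnPred (α p : ℝ) (B : Set 𝒴) {n : ℕ} (v : Fin n → 𝒴 × ℝ) : ℝ :=
  urnMass α p B v / urnTotal α v

lemma urnTotal_pos (hα : 0 < α) (v : Fin n → 𝒴 × ℝ) : 0 < urnTotal α v :=
  add_pos_of_pos_of_nonneg hα (Finset.sum_nonneg fun _ _ => le_max_right _ _)

lemma urnMass_mem_Icc (hα : 0 ≤ α) (hp : p ∈ Icc 0 1) (v : Fin n → 𝒴 × ℝ) :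
    urnMass α p B v ∈ Icc 0 (urnTotal α v) := by
  have hind : ∀ y, B.indicator (fun _ => (1 : ℝ)) y ∈ Icc 0 1 := fun y => by
    by_cases hy : y ∈ B <;> simp [hy]
  refine ⟨add_nonneg (mul_nonneg hα hp.1) (Finset.sum_nonneg fun i _ => ?_),
    add_le_add (mul_le_of_le_one_right hα hp.2) (Finset.sum_le_sum fun i _ => ?_)⟩
  · exact mul_nonneg (le_max_right _ _) (hind _).1
  · exact mul_le_of_le_one_right (le_max_right _ _) (hind _).2

lemma urnPred_mem_Icc (hα : 0 ≤ α) (hp : p ∈ Icc 0 1) (v : Fin n → 𝒴 × ℝ) :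
    urnPred α p B v ∈ Icc 0 1 :=
  div_mem_Icc_of_mem_Icc (urnMass_mem_Icc hα hp v)

lemma urn_update_mem_Icc (hα : 0 ≤ α) (hp : p ∈ Icc 0 1) (v : Fin n → 𝒴 × ℝ) (y : 𝒴) (z : ℝ) :
    (urnMass α p B v + max z 0 * B.indicator (fun _ => (1 : ℝ)) y) / (urnTotal α v + max z 0)
      ∈ Icc 0 1 := by
  have hv := urnMass_mem_Icc (B := B) hα hp v
  have hz : 0 ≤ max z 0 := le_max_right z 0
  have hy : B.indicator (fun _ => (1 : ℝ)) y ∈ Icc 0 1 := by by_cases h : y ∈ B <;> simp [h]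
  refine div_mem_Icc_of_mem_Icc ⟨by nlinarith [hv.1, hy.1], by nlinarith [hv.2, hy.2]⟩

lemma measurable_urnMass [MeasurableSpace 𝒴] (hB : MeasurableSet B) :
    Measurable (urnMass α p B (n := n)) :=
  measurable_const.add <| Finset.measurable_sum _ fun i _ =>
    ((measurable_pi_apply i).snd.max measurable_const).mul
      ((measurable_const.indicator hB).comp (measurable_pi_apply i).fst)

lemma measurable_urnTotal [MeasurableSpace 𝒴] : Measurable (urnTotal (𝒴 := 𝒴) α (n := n)) :=
  measurable_const.add <| Finset.measurable_sum _ fun i _ =>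
    (measurable_pi_apply i).snd.max measurable_const

lemma measurable_urnPred [MeasurableSpace 𝒴] (hB : MeasurableSet B) :
    Measurable (urnPred α p B (n := n)) :=
  (measurable_urnMass hB).div measurable_urnTotal

lemma urnMass_succ (ω : ℕ → 𝒴 × ℝ) :
    urnMass α p B (fun i : Fin (n + 1) => ω i)
      = urnMass α p B (fun i : Fin n => ω i)
        + max (ω n).2 0 * B.indicator (fun _ => (1 : ℝ)) (ω n).1 := by
  simp [urnMass, Fin.sum_univ_castSucc, add_assoc]

lemma urnTotal_succ (ω : ℕ → 𝒴 × ℝ) :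
    urnTotal α (fun i : Fin (n + 1) => ω i)
      = urnTotal α (fun i : Fin n => ω i) + max (ω n).2 0 := by
  simp [urnTotal, Fin.sum_univ_castSucc, add_assoc]

lemma urnPred_zero (hα : 0 < α) (v : Fin 0 → 𝒴 × ℝ) : urnPred α p B v = p := by
  simp [urnPred, urnMass, urnTotal, hα.ne']

end Urn

section Predictive

variable {𝒴 : Type*} [MeasurableSpace 𝒴] {P : Measure (ℕ → 𝒴 × ℝ)} [IsProbabilityMeasure P]
  {α p : ℝ} {B : Set 𝒴} {n : ℕ}

lemma condExp_indicator_fst_ae_eq_urnPred (hα : 0 < α) (hpos : ∀ᵐ ω ∂P, ∀ n, 0 < (ω n).2)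
    (hpred : ∀ B : Set 𝒴, MeasurableSet B → ∀ n : ℕ, 1 ≤ n →
      (P[fun ω => B.indicator (fun _ => (1 : ℝ)) ((ω n).1) | cylG (𝒴 × ℝ) n])
        =ᵐ[P] fun ω =>
          (α * (P {ω' | (ω' 0).1 ∈ B}).toReal
            + ∑ i ∈ Finset.range n, (ω i).2 * B.indicator (fun _ => (1 : ℝ)) ((ω i).1))
          / (α + ∑ i ∈ Finset.range n, (ω i).2))
    (hB : MeasurableSet B) (n : ℕ) :
    P[fun ω => B.indicator (fun _ => (1 : ℝ)) (ω n).1 | cylG (𝒴 × ℝ) n]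
      =ᵐ[P] fun ω => urnPred α (P {ω' | (ω' 0).1 ∈ B}).toReal B (fun i : Fin n => ω i) := by
  rcases Nat.eq_zero_or_pos n with rfl | hn
  · refine ae_of_all _ fun ω => ?_
    simp only [cylG_zero, condExp_bot', urnPred_zero hα, probReal_univ, inv_one, one_smul]
    exact integral_indicator_one_comp (f := fun ω : ℕ → 𝒴 × ℝ => (ω 0).1)
      (measurable_pi_apply 0).fst hB
  · filter_upwards [hpred B hB n hn, hpos] with ω hω hωpos
    simp only [hω, urnPred, urnMass, urnTotal, Finset.sum_range, max_eq_left (hωpos _).le]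

lemma integral_mul_indicator_fst_eq
    (hpred : P[fun ω => B.indicator (fun _ => (1 : ℝ)) (ω n).1 | cylG (𝒴 × ℝ) n]
      =ᵐ[P] fun ω => urnPred α p B (fun i : Fin n => ω i))
    (hB : MeasurableSet B) {g : (Fin n → 𝒴 × ℝ) → ℝ} (hg : Measurable g) {C : ℝ}
    (hgC : ∀ v, ‖g v‖ ≤ C) :
    ∫ ω, g (fun i : Fin n => ω i) * B.indicator (fun _ => (1 : ℝ)) (ω n).1 ∂P
      = ∫ ω, g (fun i : Fin n => ω i) * urnPred α p B (fun i : Fin n => ω i) ∂P := by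
  have hint : Integrable (fun ω => B.indicator (fun _ => (1 : ℝ)) (ω n).1) P :=
    .of_bound
      ((measurable_const.indicator hB).comp (measurable_pi_apply n).fst).aestronglyMeasurable 1
      (ae_of_all _ fun ω => norm_indicator_one_le _ _)
  rw [← integral_mul_condExp (cylG_le _ n) (measurable_comp_cylG hg).stronglyMeasurable
    (ae_of_all _ fun ω => hgC _) hint]
  refine integral_congr_ae ?_
  filter_upwards [hpred] with ω hω
  rw [hω]

lemma integral_mul_urnPred_succ_eq (hα : 0 < α) (hp : p ∈ Icc 0 1) (hB : MeasurableSet B)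
    (hindep : IndepFun (fun ω => (ω n).2) (fun ω => ((fun i : Fin n => ω i), (ω n).1)) P)
    {g : (Fin n → 𝒴 × ℝ) → ℝ} (hg : Measurable g) {C : ℝ} (hgC : ∀ v, ‖g v‖ ≤ C) :
    ∫ ω, g (fun i : Fin n => ω i) * urnPred α p B (fun i : Fin (n + 1) => ω i) ∂P
      = ∫ ω, g (fun i : Fin n => ω i) *
          (urnMass α p B (fun i : Fin n => ω i)
              * meanInvTotal (P.map fun ω => (ω n).2) (urnTotal α fun i : Fin n => ω i)
            + B.indicator (fun _ => (1 : ℝ)) (ω n).1 * (1 - urnTotal α (fun i : Fin n => ω i)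
              * meanInvTotal (P.map fun ω => (ω n).2) (urnTotal α fun i : Fin n => ω i))) ∂P := by
  set T := fun ω : ℕ → 𝒴 × ℝ => ((fun i : Fin n => ω i), (ω n).1)
  have hT : Measurable T :=
    (measurable_pi_lambda _ fun _ => measurable_pi_apply _).prodMk (measurable_pi_apply n).fst
  have hZ : Measurable fun ω : ℕ → 𝒴 × ℝ => (ω n).2 := (measurable_pi_apply n).snd
  have : IsProbabilityMeasure (P.map fun ω => (ω n).2) :=
    Measure.isProbabilityMeasure_map hZ.aemeasurable
  set F : ((Fin n → 𝒴 × ℝ) × 𝒴) × ℝ → ℝ := fun q => g q.1.1 *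
    ((urnMass α p B q.1.1 + max q.2 0 * B.indicator (fun _ => (1 : ℝ)) q.1.2)
      / (urnTotal α q.1.1 + max q.2 0))
  have hF : Integrable F ((P.map T).prod (P.map fun ω => (ω n).2)) := by
    refine .of_bound (Measurable.aestronglyMeasurable ?_) (C * 1) (ae_of_all _ fun q =>
      norm_mul_le_of_le (hgC _) (norm_le_one_of_mem_Icc (urn_update_mem_Icc hα.le hp _ _ _)))
    have hv : Measurable fun q : ((Fin n → 𝒴 × ℝ) × 𝒴) × ℝ => q.1.1 := by fun_prop
    have hz : Measurable fun q : ((Fin n → 𝒴 × ℝ) × 𝒴) × ℝ => max q.2 0 := by fun_prop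
    exact (hg.comp hv).mul ((((measurable_urnMass hB).comp hv).add (hz.mul
      ((measurable_const.indicator hB).comp (measurable_snd.comp measurable_fst)))).div
      ((measurable_urnTotal.comp hv).add hz))
  calc _ = ∫ ω, F (T ω, (ω n).2) ∂P := by
        simp only [F, T, urnPred, urnMass_succ, urnTotal_succ]
    _ = ∫ ω, ∫ z, F (T ω, z) ∂(P.map fun ω => (ω n).2) ∂P :=
        hindep.symm.integral_comp_eq_integral_integral hT hZ hF
    _ = _ := by
        simp only [F, T, integral_const_mul, integral_urn_update (urnTotal_pos hα _)]

lemma integral_mul_urnPred_succ (hα : 0 < α) (hp : p ∈ Icc 0 1) (hB : MeasurableSet B)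
    (hindep : IndepFun (fun ω => (ω n).2) (fun ω => ((fun i : Fin n => ω i), (ω n).1)) P)
    (hpred : P[fun ω => B.indicator (fun _ => (1 : ℝ)) (ω n).1 | cylG (𝒴 × ℝ) n]
      =ᵐ[P] fun ω => urnPred α p B (fun i : Fin n => ω i))
    {g : (Fin n → 𝒴 × ℝ) → ℝ} (hg : Measurable g) {C : ℝ} (hgC : ∀ v, ‖g v‖ ≤ C) :
    ∫ ω, g (fun i : Fin n => ω i) * urnPred α p B (fun i : Fin (n + 1) => ω i) ∂P
      = ∫ ω, g (fun i : Fin n => ω i) * urnPred α p B (fun i : Fin n => ω i) ∂P := by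
  rw [integral_mul_urnPred_succ_eq hα hp hB hindep hg hgC]
  set ν := P.map fun ω : ℕ → 𝒴 × ℝ => (ω n).2
  have : IsProbabilityMeasure ν :=
    Measure.isProbabilityMeasure_map (measurable_pi_apply n).snd.aemeasurable
  set a := urnMass α p B (n := n)
  set c := urnTotal (𝒴 := 𝒴) α (n := n)
  set r := fun v => meanInvTotal ν (c v)
  have hcr : ∀ v, c v * r v ∈ Icc 0 1 := fun v => mul_meanInvTotal_mem_Icc (urnTotal_pos hα v)
  have har : ∀ v, a v * r v ∈ Icc 0 1 := fun v => by
    have hr : 0 ≤ r v := nonneg_of_mul_nonneg_right (hcr v).1 (urnTotal_pos hα v)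
    have hav := urnMass_mem_Icc (B := B) hα.le hp v
    exact ⟨mul_nonneg hav.1 hr, (mul_le_mul_of_nonneg_right hav.2 hr).trans (hcr v).2⟩
  have hr : Measurable r := measurable_meanInvTotal.comp measurable_urnTotal
  set g₁ := fun v => g v * (a v * r v)
  set g₂ := fun v => g v * (1 - c v * r v)
  have hg₂ : Measurable g₂ := hg.mul (measurable_const.sub (measurable_urnTotal.mul hr))
  have hg₂C : ∀ v, ‖g₂ v‖ ≤ C * 1 := fun v => norm_mul_le_of_le (hgC v)
    (norm_le_one_of_mem_Icc ⟨by linarith [(hcr v).2], by linarith [(hcr v).1]⟩)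
  have hX : Measurable fun ω : ℕ → 𝒴 × ℝ => fun i : Fin n => ω i :=
    measurable_pi_lambda _ fun _ => measurable_pi_apply _
  have hint₁ : Integrable (fun ω => g₁ fun i : Fin n => ω i) P :=
    .of_bound ((hg.mul ((measurable_urnMass hB).mul hr)).comp hX).aestronglyMeasurable (C * 1)
      (ae_of_all _ fun ω => norm_mul_le_of_le (hgC _) (norm_le_one_of_mem_Icc (har _)))
  have hint₂ : Integrable
      (fun ω => g₂ (fun i : Fin n => ω i) * B.indicator (fun _ => (1 : ℝ)) (ω n).1) P :=
    .of_bound ((hg₂.comp hX).mul ((measurable_const.indicator hB).comp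
      (measurable_pi_apply n).fst)).aestronglyMeasurable (C * 1 * 1)
      (ae_of_all _ fun ω => norm_mul_le_of_le (hg₂C _) (norm_indicator_one_le _ _))
  have hint₃ : Integrable
      (fun ω => g₂ (fun i : Fin n => ω i) * urnPred α p B fun i : Fin n => ω i) P :=
    .of_bound ((hg₂.comp hX).mul ((measurable_urnPred hB).comp hX)).aestronglyMeasurable
      (C * 1 * 1) (ae_of_all _ fun ω =>
        norm_mul_le_of_le (hg₂C _) (norm_le_one_of_mem_Icc (urnPred_mem_Icc hα.le hp _)))
  calc _ = ∫ ω, g₁ (fun i : Fin n => ω i)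
          + g₂ (fun i : Fin n => ω i) * B.indicator (fun _ => (1 : ℝ)) (ω n).1 ∂P := by
        congr 1
        ext ω
        simp only [g₁, g₂, r]
        ring
    _ = ∫ ω, g₁ (fun i : Fin n => ω i)
          + g₂ (fun i : Fin n => ω i) * urnPred α p B (fun i : Fin n => ω i) ∂P := by
        rw [integral_add hint₁ hint₂, integral_add hint₁ hint₃,
          integral_mul_indicator_fst_eq hpred hB hg₂ hg₂C]
    _ = _ := by
        congr 1
        ext ω
        have hcω : urnTotal α (fun i : Fin n => ω i) ≠ 0 := (urnTotal_pos hα _).ne'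
        simp only [g₁, g₂, urnPred, a, c]
        field_simp
        ring

lemma integral_mul_indicator_fst_succ_eq (hα : 0 < α) (hp : p ∈ Icc 0 1)
    (hB : MeasurableSet B)
    (hindep : IndepFun (fun ω => (ω n).2) (fun ω => ((fun i : Fin n => ω i), (ω n).1)) P)
    (hpred : ∀ m, P[fun ω => B.indicator (fun _ => (1 : ℝ)) (ω m).1 | cylG (𝒴 × ℝ) m]
      =ᵐ[P] fun ω => urnPred α p B (fun i : Fin m => ω i))
    {g : (Fin n → 𝒴 × ℝ) → ℝ} (hg : Measurable g) {C : ℝ} (hgC : ∀ v, ‖g v‖ ≤ C) :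
    ∫ ω, g (fun i : Fin n => ω i) * B.indicator (fun _ => (1 : ℝ)) (ω (n + 1)).1 ∂P
      = ∫ ω, g (fun i : Fin n => ω i) * B.indicator (fun _ => (1 : ℝ)) (ω n).1 ∂P :=
  calc _ = ∫ ω, g (fun i : Fin n => ω i) * urnPred α p B (fun i : Fin (n + 1) => ω i) ∂P :=
        integral_mul_indicator_fst_eq (hpred (n + 1)) hB (g := fun v => g fun i => v i.castSucc)
          (hg.comp (measurable_pi_lambda _ fun _ => measurable_pi_apply _)) fun _ => hgC _
    _ = ∫ ω, g (fun i : Fin n => ω i) * urnPred α p B (fun i : Fin n => ω i) ∂P :=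
        integral_mul_urnPred_succ hα hp hB hindep (hpred n) hg hgC
    _ = _ := (integral_mul_indicator_fst_eq (hpred n) hB hg hgC).symm

end Predictive

section Law

variable {𝒴 : Type*} [MeasurableSpace 𝒴] {P : Measure (ℕ → 𝒴 × ℝ)} [IsProbabilityMeasure P]
  {α : ℝ} {p : Set 𝒴 → ℝ} {n : ℕ}

lemma map_restrict_fst_succ_eq (hα : 0 < α) (hp : ∀ B, p B ∈ Icc 0 1)
    (hindep : IndepFun (fun ω => (ω n).2) (fun ω => ((fun i : Fin n => ω i), (ω n).1)) P)
    (hpred : ∀ B, MeasurableSet B → ∀ m,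
      P[fun ω => B.indicator (fun _ => (1 : ℝ)) (ω m).1 | cylG (𝒴 × ℝ) m]
        =ᵐ[P] fun ω => urnPred α (p B) B (fun i : Fin m => ω i))
    {A : Set (ℕ → 𝒴 × ℝ)} (hA : MeasurableSet[cylG (𝒴 × ℝ) n] A) :
    (P.restrict A).map (fun ω => (ω (n + 1)).1) = (P.restrict A).map (fun ω => (ω n).1) := by
  obtain ⟨A₀, hA₀, rfl⟩ := hA
  have hX : Measurable fun ω : ℕ → 𝒴 × ℝ => fun i : Fin n => ω i :=
    measurable_pi_lambda _ fun _ => measurable_pi_apply _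
  ext B hB
  have key := integral_mul_indicator_fst_succ_eq hα (hp B) hB hindep (hpred B hB)
    (measurable_const.indicator hA₀) (norm_indicator_one_le A₀)
  rw [integral_indicator_comp_mul_indicator_comp hX (measurable_pi_apply _).fst hA₀ hB,
    integral_indicator_comp_mul_indicator_comp hX (measurable_pi_apply _).fst hA₀ hB,
    measureReal_eq_measureReal_iff] at key
  rw [Measure.map_apply (measurable_pi_apply _).fst hB,
    Measure.map_apply (measurable_pi_apply _).fst hB,
    Measure.restrict_apply' (hX hA₀), Measure.restrict_apply' (hX hA₀), Set.inter_comm, key,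
    Set.inter_comm]

lemma map_restrict_eq_prod
    (hindep : IndepFun (fun ω => (ω n).2) (fun ω => ((fun i : Fin n => ω i), (ω n).1)) P)
    {A : Set (ℕ → 𝒴 × ℝ)} (hA : MeasurableSet[cylG (𝒴 × ℝ) n] A) :
    (P.restrict A).map (fun ω => ω n)
      = ((P.restrict A).map fun ω => (ω n).1).prod (P.map fun ω => (ω n).2) := by
  obtain ⟨A₀, hA₀, rfl⟩ := hA
  have hX : Measurable fun ω : ℕ → 𝒴 × ℝ => fun i : Fin n => ω i :=
    measurable_pi_lambda _ fun _ => measurable_pi_apply _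
  refine (Measure.prod_eq fun s t hs ht => ?_).symm
  rw [Measure.map_apply (measurable_pi_apply n) (hs.prod ht),
    Measure.map_apply (measurable_pi_apply n).fst hs,
    Measure.map_apply (measurable_pi_apply n).snd ht,
    Measure.restrict_apply' (hX hA₀), Measure.restrict_apply' (hX hA₀), mul_comm]
  convert hindep.measure_inter_preimage_eq_mul t (A₀ ×ˢ s) ht (hA₀.prod hs) using 2
  · ext ω
    simp only [Set.mem_inter_iff, Set.mem_preimage, Set.mem_prod]
    tauto
  · congr 1
    ext ω
    simp only [Set.mem_inter_iff, Set.mem_preimage, Set.mem_prod]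
    tauto

lemma map_restrict_succ_eq (hα : 0 < α) (hp : ∀ B, p B ∈ Icc 0 1)
    (hindep : ∀ n, IndepFun (fun ω => (ω n).2) (fun ω => ((fun i : Fin n => ω i), (ω n).1)) P)
    (hid : ∀ n, P.map (fun ω => (ω n).2) = P.map (fun ω => (ω 0).2))
    (hpred : ∀ B, MeasurableSet B → ∀ m,
      P[fun ω => B.indicator (fun _ => (1 : ℝ)) (ω m).1 | cylG (𝒴 × ℝ) m]
        =ᵐ[P] fun ω => urnPred α (p B) B (fun i : Fin m => ω i))
    {A : Set (ℕ → 𝒴 × ℝ)} (hA : MeasurableSet[cylG (𝒴 × ℝ) n] A) :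
    (P.restrict A).map (fun ω => ω (n + 1)) = (P.restrict A).map (fun ω => ω n) := by
  rw [map_restrict_eq_prod (hindep (n + 1)) (cylG_mono _ n.le_succ _ hA),
    map_restrict_eq_prod (hindep n) hA, hid (n + 1), hid n,
    map_restrict_fst_succ_eq hα hp (hindep n) hpred hA]

lemma condExp_indicator_succ_ae_eq (hα : 0 < α) (hp : ∀ B, p B ∈ Icc 0 1)
    (hindep : ∀ n, IndepFun (fun ω => (ω n).2) (fun ω => ((fun i : Fin n => ω i), (ω n).1)) P)
    (hid : ∀ n, P.map (fun ω => (ω n).2) = P.map (fun ω => (ω 0).2))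
    (hpred : ∀ B, MeasurableSet B → ∀ m,
      P[fun ω => B.indicator (fun _ => (1 : ℝ)) (ω m).1 | cylG (𝒴 × ℝ) m]
        =ᵐ[P] fun ω => urnPred α (p B) B (fun i : Fin m => ω i))
    {s : Set (𝒴 × ℝ)} (hs : MeasurableSet s) (n : ℕ) :
    P[fun ω => s.indicator (fun _ => (1 : ℝ)) (ω (n + 1)) | cylG (𝒴 × ℝ) n]
      =ᵐ[P] P[fun ω => s.indicator (fun _ => (1 : ℝ)) (ω n) | cylG (𝒴 × ℝ) n] := by
  have hind : Measurable (s.indicator fun _ => (1 : ℝ)) := measurable_const.indicator hs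
  have hint : ∀ m, Integrable (fun ω : ℕ → 𝒴 × ℝ => s.indicator (fun _ => (1 : ℝ)) (ω m)) P :=
    fun m => .of_bound (hind.comp (measurable_pi_apply m)).aestronglyMeasurable 1
      (ae_of_all _ fun _ => norm_indicator_one_le _ _)
  refine condExp_ae_eq_condExp_of_forall_setIntegral_eq (cylG_le _ n) (hint _) (hint _)
    fun A hA => ?_
  rw [← integral_map (measurable_pi_apply _).aemeasurable hind.aestronglyMeasurable,
    ← integral_map (measurable_pi_apply _).aemeasurable hind.aestronglyMeasurable,
    map_restrict_succ_eq hα hp hindep hid hpred hA]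

end Law

/-- Lemma 6: the generalized Pólya urn sequence `X_n = (Y_n, Z_n)` is c.i.d.
Here `S = 𝒴 × ℝ`, with the weights `Z_n` a.s. in `(0,∞)`. -/
theorem stmt14 {𝒴 : Type*} [MeasurableSpace 𝒴] (P : Measure (ℕ → 𝒴 × ℝ))
    [IsProbabilityMeasure P] (α : ℝ) (hα : 0 < α)
    (hpos : ∀ᵐ ω ∂P, ∀ n, 0 < (ω n).2)
    -- `Z_{n+1}` is independent of `(X_1, Z_1, …, X_n, Z_n, Y_{n+1})` …
    (hindep : ∀ n : ℕ, ProbabilityTheory.Indep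
      (MeasurableSpace.comap (fun ω => (ω n).2) inferInstance)
      (MeasurableSpace.comap
        (fun ω => ((fun i : Fin n => ω i), (ω n).1)) inferInstance) P)
    -- … and has the same law as `Z_1`:
    (hid : ∀ n : ℕ, P.map (fun ω => (ω n).2) = P.map (fun ω => (ω 0).2))
    -- predictive distributions (4):
    (hpred : ∀ B : Set 𝒴, MeasurableSet B → ∀ n : ℕ, 1 ≤ n →
      (P[fun ω => B.indicator (fun _ => (1 : ℝ)) ((ω n).1) | cylG (𝒴 × ℝ) n])
        =ᵐ[P] fun ω =>
          (α * (P {ω' | (ω' 0).1 ∈ B}).toReal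
            + ∑ i ∈ Finset.range n, (ω i).2 * B.indicator (fun _ => (1 : ℝ)) ((ω i).1))
          / (α + ∑ i ∈ Finset.range n, (ω i).2)) :
    CID P := by
  have hp : ∀ B : Set 𝒴, (P {ω' | (ω' 0).1 ∈ B}).toReal ∈ Icc 0 1 :=
    fun _ => ⟨ENNReal.toReal_nonneg, measureReal_le_one⟩
  intro s hs n k hnk
  exact condExp_ae_eq_of_forall_condExp_succ_ae_eq (cylG_mono _) (cylG_le _)
    (f := fun m ω => s.indicator (fun _ => (1 : ℝ)) (ω m))
    (condExp_indicator_succ_ae_eq hα hp hindep hid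
      (fun B hB => condExp_indicator_fst_ae_eq_urnPred hα hpos hpred hB) hs) hnk.le
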